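/- Let 𝒜₀ be the p×p Jacobi matrix with diagonal a₀,…,a_{p−1} and off-diagonal b₀,…,b_{p−2}, let δ₀ be the first standard basis vector of ℂ^p, and let z ∈ ℂ with e_p(z) ≠ 0. Then (𝒜₀ − zI)^{−1}(√s₀·δ₀) = (0, d₁(z), …, d_{p−1}(z))ᵀ − (d_p(z)/e_p(z))·(e₀(z), e₁(z), …, e_{p−1}(z))ᵀ. In particular, a₀₀(z) := s₀ times the (0,0) entry of (𝒜₀ − zI)^{−1} equals −d_p(z)/e_p(z). -/

import Mathlib

/-!
Let `𝒜` act on sequences `v : ℕ → ℂ` by `(𝒜v)ₖ = b_{k-1} v_{k-1} + a_k v_k + b_k v_{k+1}` (no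
`b_{-1}` term in row `0`). The recurrences say `𝒜e = z e` and `𝒜d = z d + √s₀ δ₀` on rows `k < p`,
so `F = d - (d_p/e_p) e` satisfies `𝒜F = z F + √s₀ δ₀` there and `F_p = 0`; since `F_p = 0`, the
first `p` rows of `𝒜F` are `𝒜₀ F`, i.e. `(𝒜₀ - z) F = √s₀ δ₀`. The matrix `𝒜₀ - z` is invertible:
a null vector, extended by `0`, solves the homogeneous recurrence, so as `b_k ≠ 0` it is a multiple
of `e`, and its vanishing `p`-th entry forces that multiple to be `0` because `e_p ≠ 0`.
Finally `F₀ = -(d_p/e_p)/√s₀` gives the `(0,0)` entry.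
-/

open Matrix

noncomputable section

/-- The `p×p` Jacobi matrix with diagonal entries `a₀,…,a_{p-1}` and sub- and
superdiagonal entries `b₀,…,b_{p-2}`. -/
def jacobiMatrix (p : ℕ) (a b : ℕ → ℝ) : Matrix (Fin p) (Fin p) ℝ :=
  Matrix.of fun i j =>
    if (i : ℕ) = (j : ℕ) then a (i : ℕ)
    else if (i : ℕ) + 1 = (j : ℕ) then b (i : ℕ)
    else if (j : ℕ) + 1 = (i : ℕ) then b (j : ℕ)
    else 0

def jacobiOperator (a b : ℕ → ℝ) : (ℕ → ℂ) →ₗ[ℂ] (ℕ → ℂ) where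
  toFun v k := (if k = 0 then 0 else (b (k - 1) : ℂ) * v (k - 1)) + (a k : ℂ) * v k +
    (b k : ℂ) * v (k + 1)
  map_add' u v := by
    ext k
    simp only [Pi.add_apply]
    split_ifs <;> ring
  map_smul' c v := by
    ext k
    simp only [Pi.smul_apply, smul_eq_mul, RingHom.id_apply]
    split_ifs <;> ring

namespace jacobiOperator

variable {a b : ℕ → ℝ}

theorem apply_zero (v : ℕ → ℂ) : jacobiOperator a b v 0 = (a 0 : ℂ) * v 0 + (b 0 : ℂ) * v 1 := by
  simp [jacobiOperator]

theorem apply_succ (v : ℕ → ℂ) (k : ℕ) :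
    jacobiOperator a b v (k + 1) =
      (b k : ℂ) * v k + (a (k + 1) : ℂ) * v (k + 1) + (b (k + 1) : ℂ) * v (k + 2) := by
  simp [jacobiOperator]

theorem eq_zero_of_eigen {n : ℕ} (hb : ∀ k < n, (b k : ℂ) ≠ 0) {z : ℂ} {u : ℕ → ℂ}
    (hu : ∀ k < n, jacobiOperator a b u k = z * u k) (h0 : u 0 = 0) :
    ∀ k ≤ n, u k = 0 := by
  intro k
  induction k using Nat.strong_induction_on with
  | _ k ih =>
    intro hk
    cases k with
    | zero => exact h0
    | succ k =>
      have hrow := hu k (by omega)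
      have hk0 : u k = 0 := ih k (by omega) (by omega)
      have hk1 : u (k - 1) = 0 := ih (k - 1) (by omega) (by omega)
      simp only [jacobiOperator, LinearMap.coe_mk, AddHom.coe_mk, hk0, hk1] at hrow
      simpa [hb k (by omega)] using hrow

theorem eq_mul_of_eigen {n : ℕ} (hb : ∀ k < n, (b k : ℂ) ≠ 0) {z : ℂ} {u e : ℕ → ℂ}
    (hu : ∀ k < n, jacobiOperator a b u k = z * u k)
    (he : ∀ k < n, jacobiOperator a b e k = z * e k) (he0 : e 0 ≠ 0) :
    ∀ k ≤ n, u k = (u 0 / e 0) * e k := by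
  have hdiff : ∀ k ≤ n, (u - (u 0 / e 0) • e) k = 0 := eq_zero_of_eigen (a := a) (z := z) hb
    (fun k hk => by simp [hu k hk, he k hk]; ring) (by simp [he0])
  intro k hk
  simpa [sub_eq_zero] using hdiff k hk

theorem apply_eq_of_recurrence {p : ℕ} {z c : ℂ} {v : ℕ → ℂ}
    (h0 : (a 0 : ℂ) * v 0 + (b 0 : ℂ) * v 1 = z * v 0 + c)
    (hrec : ∀ k, 1 ≤ k → k ≤ p - 1 →
      (b (k - 1) : ℂ) * v (k - 1) + (a k : ℂ) * v k + (b k : ℂ) * v (k + 1) = z * v k) :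
    ∀ k < p, jacobiOperator a b v k = z * v k + if k = 0 then c else 0 := by
  rintro (_ | k) hk
  · simpa [apply_zero] using h0
  · simpa [apply_succ] using hrec (k + 1) (by omega) (by omega)

end jacobiOperator

section jacobiMatrix

variable {p : ℕ} {a b : ℕ → ℝ} {z : ℂ}

theorem jacobiMatrix_mulVec {v : ℕ → ℂ} (hv : v p = 0) (i : Fin p) :
    ((jacobiMatrix p a b).map Complex.ofReal *ᵥ fun j : Fin p => v j) i =
      jacobiOperator a b v i := by
  set f : ℕ → ℂ := fun k => (if k + 1 = i then (b k : ℂ) * v k else 0) +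
    (if k = i then (a i : ℂ) * v k else 0) + (if k = i + 1 then (b i : ℂ) * v k else 0)
  have hentry : ∀ j : Fin p, ((jacobiMatrix p a b i j : ℝ) : ℂ) * v j = f j := by
    intro j
    simp only [f, jacobiMatrix, Matrix.of_apply]
    split_ifs <;> first | omega | simp
  rw [Matrix.mulVec, dotProduct]
  simp only [Matrix.map_apply, hentry]
  rw [Fin.sum_univ_eq_sum_range f]
  have hlast : (if (i : ℕ) + 1 < p then (b i : ℂ) * v (i + 1) else 0) = (b i : ℂ) * v (i + 1) := by
    split_ifs with h
    · rfl
    · rw [show (i : ℕ) + 1 = p by omega, hv, mul_zero]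
  rcases i with ⟨_ | m, hi⟩ <;>
    simpa [f, Finset.sum_add_distrib, Finset.sum_ite_eq', jacobiOperator, hi, Nat.lt_of_succ_lt]
      using hlast

theorem jacobiMatrix_sub_smul_mulVec {v : ℕ → ℂ} (hv : v p = 0) (i : Fin p) :
    (((jacobiMatrix p a b).map Complex.ofReal - z • 1) *ᵥ fun j : Fin p => v j) i =
      jacobiOperator a b v i - z * v i := by
  rw [sub_mulVec, smul_mulVec, one_mulVec, Pi.sub_apply, Pi.smul_apply, smul_eq_mul,
    jacobiMatrix_mulVec hv]

theorem isUnit_jacobiMatrix_sub_smul (hb : ∀ k < p, (b k : ℂ) ≠ 0) {e : ℕ → ℂ}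
    (he : ∀ k < p, jacobiOperator a b e k = z * e k) (he0 : e 0 ≠ 0) (hep : e p ≠ 0) :
    IsUnit ((jacobiMatrix p a b).map Complex.ofReal - z • 1) := by
  refine mulVec_injective_iff_isUnit.mp <|
    (injective_iff_map_eq_zero (mulVecLin _)).mpr fun g hg => ?_
  set G : ℕ → ℂ := fun k => if h : k < p then g ⟨k, h⟩ else 0
  have hGp : G p = 0 := by simp [G]
  have hgG : g = fun j : Fin p => G j := by ext j; simp [G]
  have hG : ∀ k < p, jacobiOperator a b G k = z * G k := fun k hk => by
    have := congr_fun hg ⟨k, hk⟩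
    rw [mulVecLin_apply, hgG, jacobiMatrix_sub_smul_mulVec hGp] at this
    exact sub_eq_zero.mp this
  have hGe := jacobiOperator.eq_mul_of_eigen hb hG he he0
  have hG0 : G 0 = 0 := by
    simpa [hGp, hep, he0] using hGe p le_rfl
  ext j
  simpa [hG0, hgG] using hGe j j.isLt.le

theorem jacobiMatrix_sub_smul_mulVec_eq_smul_single (hp : 0 < p) {v : ℕ → ℂ} (hv : v p = 0)
    {c : ℂ} (hrow : ∀ k < p, jacobiOperator a b v k = z * v k + if k = 0 then c else 0) :
    ((jacobiMatrix p a b).map Complex.ofReal - z • 1) *ᵥ (fun j : Fin p => v j) =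
      c • Pi.single ⟨0, hp⟩ 1 := by
  ext i
  rw [jacobiMatrix_sub_smul_mulVec hv, hrow i i.isLt]
  simp [Pi.single_apply, Fin.ext_iff]

end jacobiMatrix

/-- if `e_p(z) ≠ 0` then `(𝒜₀ - zI)⁻¹(√s₀·δ₀)` equals
`(0, d₁(z), …, d_{p-1}(z))ᵀ - (d_p(z)/e_p(z))·(e₀(z),…,e_{p-1}(z))ᵀ` (note `d₀(z) = 0`);
in particular, `a₀₀(z) := s₀` times the `(0,0)` entry of `(𝒜₀ - zI)⁻¹` equals
`-d_p(z)/e_p(z)`. -/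
theorem jacobi_resolvent_first_column (p : ℕ) (hp : 1 ≤ p) (s₀ : ℝ) (hs₀ : 0 < s₀)
    (a b : ℕ → ℝ) (hb : ∀ k < p, 0 < b k)
    (e d : ℕ → ℂ → ℂ)
    (he0 : ∀ z : ℂ, e 0 z = 1 / (Real.sqrt s₀ : ℂ))
    (he1 : ∀ z : ℂ, e 1 z = (z - (a 0 : ℂ)) / ((b 0 : ℂ) * (Real.sqrt s₀ : ℂ)))
    (hd0 : ∀ z : ℂ, d 0 z = 0)
    (hd1 : ∀ z : ℂ, d 1 z = (Real.sqrt s₀ : ℂ) / (b 0 : ℂ))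
    (hrecE : ∀ k, 1 ≤ k → k ≤ p - 1 → ∀ z : ℂ,
      (b (k - 1) : ℂ) * e (k - 1) z + (a k : ℂ) * e k z + (b k : ℂ) * e (k + 1) z =
        z * e k z)
    (hrecD : ∀ k, 1 ≤ k → k ≤ p - 1 → ∀ z : ℂ,
      (b (k - 1) : ℂ) * d (k - 1) z + (a k : ℂ) * d k z + (b k : ℂ) * d (k + 1) z =
        z * d k z)
    (z : ℂ) (hz : e p z ≠ 0)
    (M : Matrix (Fin p) (Fin p) ℂ)
    (hM : M = ((jacobiMatrix p a b).map Complex.ofReal) - z • (1 : Matrix (Fin p) (Fin p) ℂ)) :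
    (M⁻¹.mulVec ((Real.sqrt s₀ : ℂ) • (Pi.single (⟨0, by omega⟩ : Fin p) 1 : Fin p → ℂ)) =
      fun i : Fin p => d (i : ℕ) z - (d p z / e p z) * e (i : ℕ) z) ∧
    (s₀ : ℂ) * M⁻¹ ⟨0, by omega⟩ ⟨0, by omega⟩ = -(d p z) / e p z := by
  have hsqrt : (Real.sqrt s₀ : ℂ) ≠ 0 := Complex.ofReal_ne_zero.mpr (Real.sqrt_pos.mpr hs₀).ne'
  have hb' : ∀ k < p, (b k : ℂ) ≠ 0 := fun k hk => by exact_mod_cast (hb k hk).ne'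
  have hb₀ := hb' 0 hp
  have he : ∀ k < p, jacobiOperator a b (e · z) k = z * e k z := by
    simpa using jacobiOperator.apply_eq_of_recurrence (c := 0)
      (by rw [he0, he1]; field_simp; ring) fun k hk₁ hk₂ => hrecE k hk₁ hk₂ z
  have hd := jacobiOperator.apply_eq_of_recurrence (v := (d · z)) (c := Real.sqrt s₀)
    (by rw [hd0, hd1]; field_simp; ring) fun k hk₁ hk₂ => hrecD k hk₁ hk₂ z
  set F : ℕ → ℂ := (d · z) - (d p z / e p z) • (e · z)
  have hMF : M *ᵥ (fun j : Fin p => F j) = (Real.sqrt s₀ : ℂ) • Pi.single ⟨0, hp⟩ 1 :=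
    hM ▸ jacobiMatrix_sub_smul_mulVec_eq_smul_single hp (by simp [F, hz])
      fun k hk => by simp [F, he k hk, hd k hk]; ring
  have hunit : IsUnit M := hM ▸ isUnit_jacobiMatrix_sub_smul hb' he (by simpa [he0] using hsqrt) hz
  have := hunit.invertible
  have hsol := inv_mulVec_eq_vec hMF.symm
  refine ⟨hsol, ?_⟩
  have h00 := congr_fun hsol ⟨0, hp⟩
  simp only [mulVec_smul, mulVec_single, Pi.smul_apply, col_apply, op_smul_eq_mul, mul_one,
    smul_eq_mul] at h00
  have hs₀' : (s₀ : ℂ) = Real.sqrt s₀ * Real.sqrt s₀ := by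
    exact_mod_cast (Real.mul_self_sqrt hs₀.le).symm
  rw [hs₀', mul_assoc, h00]
  simp [F, hd0, he0]
  field_simp
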